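/- arXiv:2402.16743 — 9 statements merged into one kernel-verified Lean document; each statement's English description precedes it below -/
import Mathlib

section
/- Let G be a finite group and V a finite-dimensional complex vector space with a representation ρ of G on V, with character χ(g) = trace(ρ(g)). If for some g ∈ G the absolute value ‖χ(g)‖ equals finrank ℂ V (i.e. equals χ(1)), then ρ(g) is a scalar multiple of the identity: there exists c : ℂ with ρ(g) = c • id. -/
/-!
An element of finite order acts semisimply, with eigenvalues that are roots of unity. The trace
is the sum of the `n = dim V` eigenvalues (with multiplicity), so `‖χ g‖ = n` is the equality case
of the triangle inequality for `n` unit vectors of `ℂ`: all eigenvalues coincide, and a semisimple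
endomorphism with a single eigenvalue is scalar.
-/

open Polynomial

namespace Module.End

variable {K V : Type*} [Field K] [AddCommGroup V] [Module K V] {f : End K V}

lemma HasEigenvalue.isOfFinOrder {μ : K} (hμ : f.HasEigenvalue μ) (hf : IsOfFinOrder f) :
    IsOfFinOrder μ := by
  obtain ⟨k, hk, hfk⟩ := isOfFinOrder_iff_pow_eq_one.mp hf
  obtain ⟨v, hv⟩ := hμ.exists_hasEigenvector
  have hv_fixed : μ ^ k • v = (1 : K) • v := by
    rw [← hv.pow_apply k, hfk, one_smul, one_apply]
  exact isOfFinOrder_iff_pow_eq_one.mpr ⟨k, hk, smul_left_injective K hv.2 hv_fixed⟩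

lemma isSemisimple_of_isOfFinOrder [CharZero K] (hf : IsOfFinOrder f) : f.IsSemisimple := by
  obtain ⟨k, hk, hfk⟩ := isOfFinOrder_iff_pow_eq_one.mp hf
  refine isSemisimple_of_squarefree_aeval_eq_zero
    (X_pow_sub_one_separable_iff.mpr (Nat.cast_ne_zero.mpr hk.ne')).squarefree ?_
  simp [hfk]

lemma IsSemisimple.eq_smul_id_of_forall_hasEigenvalue_eq [IsAlgClosed K] [FiniteDimensional K V]
    (hf : f.IsSemisimple) {c : K} (h : ∀ μ, f.HasEigenvalue μ → μ = c) :
    f = c • LinearMap.id := by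
  have hc : f.eigenspace c = ⊤ := by
    rw [← hf.iSup_eigenspace_eq_top]
    refine le_antisymm (le_iSup _ c) (iSup_le fun μ ↦ ?_)
    by_cases hμ : f.HasEigenvalue μ
    · rw [h μ hμ]
    · simp [not_not.mp (hasEigenvalue_iff.not.mp hμ)]
  ext v
  exact mem_eigenspace_iff.mp (hc ▸ Submodule.mem_top)

end Module.End

theorem Multiset.exists_forall_eq_of_norm_sum_eq {E : Type*} [NormedAddCommGroup E]
    [NormedSpace ℝ E] [StrictConvexSpace ℝ E] {s : Multiset E} {r : ℝ}
    (hs : ∀ x ∈ s, ‖x‖ = r) (hsum : ‖s.sum‖ = card s * r) : ∃ c, ∀ x ∈ s, x = c := by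
  rcases s.empty_or_exists_mem with rfl | ⟨c, hc⟩
  · exact ⟨0, by simp⟩
  refine ⟨c, fun x hx ↦ ?_⟩
  obtain rfl | hxc := eq_or_ne x c
  · rfl
  obtain ⟨u, rfl⟩ := Multiset.exists_cons_of_mem hx
  obtain ⟨t, rfl⟩ := Multiset.exists_cons_of_mem ((Multiset.mem_cons.mp hc).resolve_left hxc.symm)
  have ht : ‖t.sum‖ ≤ card t * r :=
    calc ‖t.sum‖ ≤ (t.map (‖·‖)).sum := norm_multiset_sum_le t
      _ ≤ card t * r := by
        have hr : ∀ y ∈ t.map (‖·‖), y ≤ r := by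
          simp only [Multiset.mem_map]
          rintro _ ⟨z, hz, rfl⟩
          exact (hs z (by simp [hz])).le
        simpa using Multiset.sum_le_card_nsmul _ r hr
  have hx_norm : ‖x‖ = r := hs x (by simp)
  have hc_norm : ‖c‖ = r := hs c (by simp)
  have hxc_norm : ‖x + c‖ = ‖x‖ + ‖c‖ := by
    refine le_antisymm (norm_add_le x c) ?_
    have := norm_add_le (x + c) t.sum
    simp only [Multiset.sum_cons, Multiset.card_cons, ← add_assoc] at hsum
    push_cast at hsum
    linarith
  exact eq_of_norm_eq_of_norm_add_eq (hx_norm.trans hc_norm.symm) hxc_norm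

/-- For a finite group `G` and a finite-dimensional complex representation `ρ`
with character `χ g = trace (ρ g)`, if `‖χ g‖ = finrank ℂ V` for some `g`, then `ρ g` is a
scalar multiple of the identity. -/
theorem character_norm_eq_finrank_imp_scalar
    {G V : Type} [Group G] [Finite G] [AddCommGroup V] [Module ℂ V] [FiniteDimensional ℂ V]
    (ρ : Representation ℂ G V)
    (χ : G → ℂ) (hχ : ∀ g : G, χ g = LinearMap.trace ℂ V (ρ g))
    (g : G) (h : ‖χ g‖ = (Module.finrank ℂ V : ℝ)) :
    ∃ c : ℂ, ρ g = c • (LinearMap.id : V →ₗ[ℂ] V) := by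
  have hfin : IsOfFinOrder (ρ g) := ρ.isOfFinOrder (isOfFinOrder_of_finite g)
  have hsplits : (ρ g).charpoly.Splits := IsAlgClosed.splits _
  have hroots : ∀ μ, μ ∈ (ρ g).charpoly.roots ↔ Module.End.HasEigenvalue (ρ g) μ := fun μ ↦ by
    rw [Module.End.hasEigenvalue_iff_isRoot_charpoly, mem_roots (ρ g).charpoly_monic.ne_zero]
  have hsum : ‖(ρ g).charpoly.roots.sum‖ = Multiset.card (ρ g).charpoly.roots * 1 := by
    rw [← Module.End.trace_eq_sum_roots_charpoly_of_splits hsplits, ← hχ, h,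
      ← hsplits.natDegree_eq_card_roots, LinearMap.charpoly_natDegree, mul_one]
  obtain ⟨c, hc⟩ := Multiset.exists_forall_eq_of_norm_sum_eq
    (fun μ hμ ↦ (((hroots μ).mp hμ).isOfFinOrder hfin).norm_eq_one) hsum
  exact ⟨c, (Module.End.isSemisimple_of_isOfFinOrder hfin).eq_smul_id_of_forall_hasEigenvalue_eq
    fun μ hμ ↦ hc μ ((hroots μ).mpr hμ)⟩
end

section
/- Let G be a finite group acting on the set of M-tuples G^M (functions Fin M → G) by simultaneous conjugation: g • (h₁,…,h_M) = (g h₁ g⁻¹, …, g h_M g⁻¹). If M ≥ 1, then the number of orbits of this action equals the sum over the conjugacy classes C of G of (|G| / |C|)^(M−1), where |C| is the cardinality of the class C. -/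
set_option maxHeartbeats 1000000

open MulAction

section Aux

variable {G : Type} [Group G] [Fintype G] [DecidableEq G] (M : ℕ)

/-- Fixed points of the conjugation action of `a : ConjAct G` on tuples are tuples of
fixed points. -/
noncomputable def fixedByPiEquiv (a : ConjAct G) :
    fixedBy (Fin M → G) a ≃ (Fin M → fixedBy G a) where
  toFun h i := ⟨h.1 i, congrFun h.2 i⟩
  invFun f := ⟨fun i => (f i).1, funext fun i => (f i).2⟩
  left_inv h := rfl
  right_inv f := rfl

/-- The fixed points of conjugation by `a` biject with the stabilizer of `ofConjAct a`. -/
noncomputable def fixedByEquivStabilizer (a : ConjAct G) :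
    fixedBy G a ≃ stabilizer (ConjAct G) (ConjAct.ofConjAct a) where
  toFun x := ⟨ConjAct.toConjAct x.1, by
    have hx : a • x.1 = x.1 := x.2
    rw [ConjAct.smul_def] at hx
    rw [mem_stabilizer_iff, ConjAct.smul_def, ConjAct.ofConjAct_toConjAct]
    have hc : Commute (ConjAct.ofConjAct a) x.1 := by
      rw [Commute, SemiconjBy]
      calc ConjAct.ofConjAct a * x.1
          = (ConjAct.ofConjAct a * x.1 * (ConjAct.ofConjAct a)⁻¹) * ConjAct.ofConjAct a := by
            group
        _ = x.1 * ConjAct.ofConjAct a := by rw [hx]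
    calc x.1 * ConjAct.ofConjAct a * x.1⁻¹
        = ConjAct.ofConjAct a * x.1 * x.1⁻¹ := by rw [hc.eq]
      _ = ConjAct.ofConjAct a := by group⟩
  invFun y := ⟨ConjAct.ofConjAct y.1, by
    have hy : y.1 • ConjAct.ofConjAct a = ConjAct.ofConjAct a := y.2
    rw [ConjAct.smul_def] at hy
    show a • ConjAct.ofConjAct y.1 = ConjAct.ofConjAct y.1
    rw [ConjAct.smul_def]
    have hc : Commute (ConjAct.ofConjAct y.1) (ConjAct.ofConjAct a) := by
      rw [Commute, SemiconjBy]
      calc ConjAct.ofConjAct y.1 * ConjAct.ofConjAct a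
          = (ConjAct.ofConjAct y.1 * ConjAct.ofConjAct a * (ConjAct.ofConjAct y.1)⁻¹) *
              ConjAct.ofConjAct y.1 := by group
        _ = ConjAct.ofConjAct a * ConjAct.ofConjAct y.1 := by rw [hy]
    calc ConjAct.ofConjAct a * ConjAct.ofConjAct y.1 * (ConjAct.ofConjAct a)⁻¹
        = ConjAct.ofConjAct y.1 * ConjAct.ofConjAct a * (ConjAct.ofConjAct a)⁻¹ := by
          rw [hc.eq]
      _ = ConjAct.ofConjAct y.1 := by group⟩
  left_inv x := by ext; simp
  right_inv y := by ext; simp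

end Aux


section Aux2

variable {G : Type} [Group G] [Fintype G] [DecidableEq G]

theorem natCard_carrier_mul_natCard_stabilizer (g : G) :
    Nat.card (ConjClasses.mk g).carrier *
      Nat.card (MulAction.stabilizer (ConjAct G) g) = Nat.card G := by
  classical
  have h := MulAction.card_orbit_mul_card_stabilizer_eq_card_group (ConjAct G) g
  have h1 : Nat.card (ConjClasses.mk g).carrier = Fintype.card (orbit (ConjAct G) g) := by
    rw [← Nat.card_eq_fintype_card]
    exact Nat.card_congr (Equiv.setCongr (ConjAct.orbit_eq_carrier_conjClasses g).symm)
  have h2 : Nat.card G = Fintype.card (ConjAct G) := by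
    rw [← Nat.card_eq_fintype_card]
    exact Nat.card_congr (ConjAct.toConjAct (G := G)).toEquiv
  rw [h1, h2, ← h, Nat.card_eq_fintype_card]

theorem natCard_carrier_pos (C : ConjClasses G) : 0 < Nat.card C.carrier := by
  obtain ⟨g, rfl⟩ := C.exists_rep
  have : Nonempty ((ConjClasses.mk g).carrier) := ⟨⟨g, ConjClasses.mem_carrier_mk⟩⟩
  exact Nat.card_pos

theorem natCard_stabilizer_eq (g : G) :
    Nat.card (MulAction.stabilizer (ConjAct G) g) =
      Nat.card G / Nat.card (ConjClasses.mk g).carrier :=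
  (Nat.div_eq_of_eq_mul_right (natCard_carrier_pos (ConjClasses.mk g))
    (natCard_carrier_mul_natCard_stabilizer g).symm).symm

theorem natCard_fixedBy_eq (M : ℕ) (a : ConjAct G) :
    Nat.card (MulAction.fixedBy (Fin M → G) a) =
      (Nat.card G / Nat.card (ConjClasses.mk (ConjAct.ofConjAct a)).carrier) ^ M := by
  have hfin : Nat.card (Fin M) = M := by simp
  rw [Nat.card_congr (fixedByPiEquiv M a), Nat.card_fun, hfin,
    Nat.card_congr (fixedByEquivStabilizer a), natCard_stabilizer_eq]

end Aux2

/-- Let a finite group `G` act on `M`-tuples `Fin M → G` by simultaneous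
conjugation. For `M ≥ 1`, the number of orbits equals
`∑_{conjugacy classes C} (|G| / |C|) ^ (M - 1)`. -/
theorem card_simultaneous_conjugation_orbits
    {G : Type} [Group G] [Fintype G] [DecidableEq G] (M : ℕ) (hM : 1 ≤ M) :
    Nat.card (Quot (fun h h' : Fin M → G => ∃ g : G, h' = fun i => g * h i * g⁻¹)) =
      ∑ C : ConjClasses G, (Nat.card G / Nat.card C.carrier) ^ (M - 1) := by
  classical
  set N := Nat.card G with hN
  -- identify the quotient with the orbit quotient of the `ConjAct G` action
  have hrel : ∀ h h' : Fin M → G,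
      (∃ g : G, h' = fun i => g * h i * g⁻¹) ↔ (orbitRel (ConjAct G) (Fin M → G)).r h h' := by
    intro h h'
    constructor
    · rintro ⟨g, rfl⟩
      show _ ∈ orbit (ConjAct G) _
      refine ⟨ConjAct.toConjAct g⁻¹, ?_⟩
      funext i
      simp [ConjAct.smul_def]
      group
    · rintro ⟨g, rfl⟩
      exact ⟨(ConjAct.ofConjAct g)⁻¹, funext fun i => by
        simp [ConjAct.smul_def]; group⟩
  have hquot : Nat.card (Quot (fun h h' : Fin M → G => ∃ g : G, h' = fun i => g * h i * g⁻¹)) =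
      Nat.card (Quotient (orbitRel (ConjAct G) (Fin M → G))) := by
    apply Nat.card_congr
    exact Quot.congr (Equiv.refl _) (by intro a b; simpa using hrel a b)
  rw [hquot]
  -- Burnside in `Nat.card` form
  have hB : ∑ a : ConjAct G, Nat.card (fixedBy (Fin M → G) a) =
      Nat.card (Quotient (orbitRel (ConjAct G) (Fin M → G))) * N := by
    have h2 : N = Fintype.card (ConjAct G) := by
      rw [hN, ← Nat.card_eq_fintype_card]
      exact Nat.card_congr (ConjAct.toConjAct (G := G)).toEquiv
    simp only [Nat.card_eq_fintype_card, h2]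
    exact MulAction.sum_card_fixedBy_eq_card_orbits_mul_card_group (ConjAct G) (Fin M → G)
  -- compute the left side of Burnside
  have hsum : ∑ a : ConjAct G, Nat.card (fixedBy (Fin M → G) a) =
      (∑ C : ConjClasses G, (N / Nat.card C.carrier) ^ (M - 1)) * N := by
    calc ∑ a : ConjAct G, Nat.card (fixedBy (Fin M → G) a)
        = ∑ a : ConjAct G, (N / Nat.card (ConjClasses.mk (ConjAct.ofConjAct a)).carrier) ^ M := by
          exact Finset.sum_congr rfl fun a _ => natCard_fixedBy_eq M a
      _ = ∑ g : G, (N / Nat.card (ConjClasses.mk g).carrier) ^ M := by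
          exact Fintype.sum_equiv (ConjAct.ofConjAct (G := G)).toEquiv _ _ fun a => rfl
      _ = ∑ C : ConjClasses G, ∑ g : {g : G // ConjClasses.mk g = C},
            (N / Nat.card (ConjClasses.mk g.1).carrier) ^ M :=
          (Fintype.sum_fiberwise ConjClasses.mk _).symm
      _ = ∑ C : ConjClasses G, Nat.card C.carrier * (N / Nat.card C.carrier) ^ M := by
          refine Finset.sum_congr rfl fun C _ => ?_
          have hconst : ∀ g : {g : G // ConjClasses.mk g = C},
              (N / Nat.card (ConjClasses.mk g.1).carrier) ^ M
                = (N / Nat.card C.carrier) ^ M := fun g => by rw [g.2]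
          rw [Finset.sum_congr rfl fun g _ => hconst g, Finset.sum_const, smul_eq_mul,
            Finset.card_univ, ← Nat.card_eq_fintype_card]
          congr 1
          exact Nat.card_congr (Equiv.subtypeEquivRight
            (fun g => (ConjClasses.mem_carrier_iff_mk_eq (b := C)).symm))
      _ = ∑ C : ConjClasses G, (N / Nat.card C.carrier) ^ (M - 1) * N := by
          refine Finset.sum_congr rfl fun C _ => ?_
          obtain ⟨g, rfl⟩ := C.exists_rep
          have hCN : Nat.card (ConjClasses.mk g).carrier *
              (N / Nat.card (ConjClasses.mk g).carrier) = N := by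
            have h := natCard_carrier_mul_natCard_stabilizer g
            rw [natCard_stabilizer_eq g] at h
            exact h
          calc Nat.card (ConjClasses.mk g).carrier *
                (N / Nat.card (ConjClasses.mk g).carrier) ^ M
              = (N / Nat.card (ConjClasses.mk g).carrier) ^ (M - 1) *
                (Nat.card (ConjClasses.mk g).carrier *
                  (N / Nat.card (ConjClasses.mk g).carrier)) := by
                conv_lhs => rw [← Nat.sub_add_cancel hM, pow_succ]
                ring
            _ = _ := by rw [hCN]
      _ = _ := Finset.sum_mul .. |>.symm
  have hNpos : 0 < N := Nat.card_pos
  exact Nat.eq_of_mul_eq_mul_right hNpos (by rw [← hB, hsum])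
end

section
/- Let G be a finite group and Γ a connected simple graph on a finite nonempty vertex set V, with v = card V vertices and l = card(edge set) edges, and suppose v ≤ l. The gauge group of families k : V → G acts on the set of G-configurations on Γ by (k • g)(d) = k(d.fst) * g(d) * (k(d.snd))⁻¹. Then the number of orbits of this action equals the sum over the conjugacy classes C of G of (|G| / |C|)^(l − v). -/
/-!
By Burnside's lemma, `#orbits * |G| ^ v = ∑ₖ #{configurations fixed by k}`. Orienting every
edge `u → w`, a configuration is fixed by `k` iff its value `x` on each edge satisfies
`k u * x = x * k w`, so the number of fixed configurations is a product over the edges of the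
sizes of these sets of conjugators. Such a set is empty unless `k u` and `k w` are conjugate,
and it is a coset of the centralizer of `k u`, of size `|G| / |C|`, when both lie in the class
`C`. As `Γ` is connected, only the `k` with all values in a single class `C` contribute, which
gives `∑_C |C| ^ v * (|G| / |C|) ^ l = |G| ^ v * ∑_C (|G| / |C|) ^ (l - v)`.
-/

lemma MulAction.sum_card_fixedBy_eq_card_orbits_mul_natCard (α β : Type*) [Group α] [Fintype α]
    [MulAction α β] [Finite β] :
    ∑ a : α, Nat.card (fixedBy β a) = Nat.card (Quotient (orbitRel α β)) * Nat.card α := by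
  rw [← Nat.card_sigma, ← Nat.card_prod,
    Nat.card_congr (sigmaFixedByEquivOrbitsProdGroup α β)]

section Conjugators

variable {G : Type*} [Group G]

def conjugators (a b : G) : Set G := {x | a * x = x * b}

lemma mem_conjugators {a b x : G} : x ∈ conjugators a b ↔ a * x = x * b := Iff.rfl

lemma inv_mem_conjugators {a b x : G} (hx : x ∈ conjugators a b) :
    x⁻¹ ∈ conjugators b a := by
  rw [mem_conjugators] at hx ⊢
  rw [eq_inv_mul_iff_mul_eq, ← mul_assoc, ← hx, mul_inv_cancel_right]

lemma isConj_of_mem_conjugators {a b x : G} (hx : x ∈ conjugators a b) : IsConj a b :=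
  isConj_iff.mpr ⟨x⁻¹, by rw [inv_inv, mul_assoc, hx, inv_mul_cancel_left]⟩

lemma card_centralizer_mul_card_carrier (a : G) :
    Nat.card (Subgroup.centralizer {a}) * Nat.card (ConjClasses.mk a).carrier = Nat.card G := by
  rw [Subgroup.nat_card_centralizer_nat_card_stabilizer, ← ConjAct.orbit_eq_carrier_conjClasses,
    Nat.card_coe_set_eq, ← MulAction.index_stabilizer, Subgroup.card_mul_index]
  rfl

lemma ConjClasses.card_carrier_dvd (C : ConjClasses G) : Nat.card C.carrier ∣ Nat.card G := by
  obtain ⟨a, rfl⟩ := C.exists_rep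
  exact Dvd.intro_left _ (card_centralizer_mul_card_carrier a)

/-- The conjugators from `c * a * c⁻¹` to `a` form the right coset `centralizer {a} * c⁻¹`. -/
lemma card_conjugators_of_isConj {a b : G} (h : IsConj a b) :
    Nat.card (conjugators a b) = Nat.card (Subgroup.centralizer {a}) := by
  obtain ⟨c, rfl⟩ := isConj_iff.mp h
  refine Nat.card_congr ((Equiv.mulRight c).subtypeEquiv fun x => ?_)
  change _ ↔ x * c ∈ Subgroup.centralizer {a}
  rw [Subgroup.mem_centralizer_singleton_iff, mem_conjugators,
    show x * (c * a * c⁻¹) = x * c * a * c⁻¹ by group, eq_mul_inv_iff_mul_eq, mul_assoc a,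
    eq_comm]

lemma card_conjugators_eq_div [Finite G] {a b : G} (h : IsConj a b) :
    Nat.card (conjugators a b) = Nat.card G / Nat.card (ConjClasses.mk a).carrier := by
  have : Nonempty (ConjClasses.mk a).carrier := ⟨⟨a, ConjClasses.mem_carrier_mk⟩⟩
  rw [card_conjugators_of_isConj h, ← card_centralizer_mul_card_carrier a,
    Nat.mul_div_cancel _ Finite.card_pos]

lemma ConjClasses.pow_card_carrier_mul_pow (C : ConjClasses G) {v l : ℕ} (hvl : v ≤ l) :
    Nat.card C.carrier ^ v * (Nat.card G / Nat.card C.carrier) ^ l =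
      (Nat.card G / Nat.card C.carrier) ^ (l - v) * Nat.card G ^ v := by
  calc Nat.card C.carrier ^ v * (Nat.card G / Nat.card C.carrier) ^ l
      = (Nat.card C.carrier * (Nat.card G / Nat.card C.carrier)) ^ v *
          (Nat.card G / Nat.card C.carrier) ^ (l - v) := by
        rw [mul_pow, mul_assoc, ← pow_add, Nat.add_sub_cancel' hvl]
    _ = _ := by rw [Nat.mul_div_cancel' C.card_carrier_dvd, mul_comm]

end Conjugators

namespace SimpleGraph

variable {V : Type*} {Γ : SimpleGraph V}

lemma Connected.apply_eq_of_forall_adj {β : Type*} {f : V → β} (hconn : Γ.Connected)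
    (hf : ∀ u w, Γ.Adj u w → f u = f w) (u w : V) : f u = f w := by
  obtain ⟨p⟩ := hconn.preconnected u w
  induction p with
  | nil => rfl
  | cons hadj _ ih => exact (hf _ _ hadj).trans ih

variable [LinearOrder V]

/-- Darts oriented upwards for a linear order on the vertices: one dart per edge. -/
abbrev PosDart (Γ : SimpleGraph V) : Type _ := {d : Γ.Dart // d.fst < d.snd}

lemma Dart.snd_lt_fst_of_not_lt {d : Γ.Dart} (hd : ¬ d.fst < d.snd) : d.snd < d.fst :=
  (not_lt.mp hd).lt_of_ne d.snd_ne_fst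

lemma card_posDart : Nat.card Γ.PosDart = Nat.card Γ.edgeSet := by
  refine Nat.card_congr (Equiv.ofBijective (fun d => ⟨d.1.edge, d.1.edge_mem⟩) ⟨?_, ?_⟩)
  · rintro ⟨d₁, h₁⟩ ⟨d₂, h₂⟩ h
    rcases (dart_edge_eq_iff d₁ d₂).mp (Subtype.ext_iff.mp h) with rfl | rfl
    · rfl
    · exact absurd h₁ (asymm h₂)
  · rintro ⟨e, he⟩
    induction e using Sym2.ind with
    | _ a b =>
      rcases lt_or_gt_of_ne (Γ.ne_of_adj he) with hab | hba
      · exact ⟨⟨⟨(a, b), he⟩, hab⟩, rfl⟩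
      · exact ⟨⟨⟨(b, a), he.symm⟩, hba⟩, Subtype.ext Sym2.eq_swap⟩

end SimpleGraph

section Gauge

variable (G : Type*) [Group G] {V : Type*} (Γ : SimpleGraph V)

def GaugeConfig : Type _ := {g : Γ.Dart → G // ∀ d, g d.symm = (g d)⁻¹}

variable {G Γ}

@[ext]
lemma GaugeConfig.ext {g g' : GaugeConfig G Γ} (h : ∀ d, g.1 d = g'.1 d) : g = g' :=
  Subtype.ext (funext h)

instance [Finite Γ.Dart] [Finite G] : Finite (GaugeConfig G Γ) :=
  Subtype.finite

instance : SMul (V → G) (GaugeConfig G Γ) where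
  smul k g := ⟨fun d => k d.fst * g.1 d * (k d.snd)⁻¹, fun d => by
    simp only [SimpleGraph.Dart.symm_toProd, Prod.fst_swap, Prod.snd_swap, g.2 d, mul_inv_rev,
      inv_inv, mul_assoc]⟩

@[simp]
lemma GaugeConfig.smul_apply (k : V → G) (g : GaugeConfig G Γ) (d : Γ.Dart) :
    (k • g).1 d = k d.fst * g.1 d * (k d.snd)⁻¹ := rfl

instance : MulAction (V → G) (GaugeConfig G Γ) where
  one_smul g := GaugeConfig.ext fun d => by simp
  mul_smul k k' g := GaugeConfig.ext fun d => by simp [mul_assoc]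

lemma GaugeConfig.smul_eq_self_iff (k : V → G) (g : GaugeConfig G Γ) :
    k • g = g ↔ ∀ d, g.1 d ∈ conjugators (k d.fst) (k d.snd) := by
  refine ⟨fun h d => ?_, fun h => GaugeConfig.ext fun d => ?_⟩
  · exact mul_inv_eq_iff_eq_mul.mp (congrArg (·.1 d) h)
  · exact mul_inv_eq_iff_eq_mul.mpr (h d)

lemma GaugeConfig.card_quot_eq_card_orbits (Γ : SimpleGraph V) :
    Nat.card (Quot fun g g' : GaugeConfig G Γ =>
        ∃ k : V → G, ∀ d : Γ.Dart, g'.1 d = k d.fst * g.1 d * (k d.snd)⁻¹) =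
      Nat.card (Quotient (MulAction.orbitRel (V → G) (GaugeConfig G Γ))) := by
  refine Nat.card_congr (Quot.congrRight fun g g' => ?_)
  change _ ↔ g ∈ MulAction.orbit (V → G) g'
  rw [MulAction.mem_orbit_symm, MulAction.mem_orbit_iff]
  exact exists_congr fun k => ⟨fun h => GaugeConfig.ext fun d => (h d).symm,
    fun h d => (congrArg (·.1 d) h).symm⟩

variable [LinearOrder V]

def GaugeConfig.restrictPos : GaugeConfig G Γ ≃ (Γ.PosDart → G) where
  toFun g d := g.1 d.1
  invFun f := ⟨fun d => if hd : d.fst < d.snd then f ⟨d, hd⟩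
      else (f ⟨d.symm, d.snd_lt_fst_of_not_lt hd⟩)⁻¹, fun d => by
      by_cases hd : d.fst < d.snd
      · simp [hd, (asymm hd : ¬ d.snd < d.fst)]
      · simp [hd, d.snd_lt_fst_of_not_lt hd]⟩
  left_inv g := GaugeConfig.ext fun d => by
    by_cases hd : d.fst < d.snd
    · simp [hd]
    · simp [hd, g.2 d]
  right_inv f := funext fun d => by simp [d.2]

lemma GaugeConfig.restrictPos_apply (g : GaugeConfig G Γ) (d : Γ.PosDart) :
    restrictPos g d = g.1 d.1 := rfl

end Gauge

section Counting

variable {G : Type*} [Group G] {V : Type*} [LinearOrder V] {Γ : SimpleGraph V} [Fintype Γ.Dart]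

lemma GaugeConfig.card_fixedBy (k : V → G) :
    Nat.card (MulAction.fixedBy (GaugeConfig G Γ) k) =
      ∏ d : Γ.PosDart, Nat.card (conjugators (k d.1.fst) (k d.1.snd)) := by
  have hfix : ∀ g : GaugeConfig G Γ, g ∈ MulAction.fixedBy _ k ↔
      ∀ d : Γ.PosDart, restrictPos g d ∈ conjugators (k d.1.fst) (k d.1.snd) := by
    intro g
    rw [MulAction.mem_fixedBy, smul_eq_self_iff]
    refine ⟨fun h d => h d.1, fun h d => ?_⟩
    by_cases hd : d.fst < d.snd
    · exact h ⟨d, hd⟩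
    · have := inv_mem_conjugators (h ⟨d.symm, d.snd_lt_fst_of_not_lt hd⟩)
      simpa only [restrictPos_apply, ← g.2, d.symm_symm, SimpleGraph.Dart.symm_toProd,
        Prod.fst_swap, Prod.snd_swap] using this
  rw [Nat.card_congr (restrictPos.subtypeEquiv
      (q := fun f => ∀ d : Γ.PosDart, f d ∈ conjugators (k d.1.fst) (k d.1.snd)) hfix),
    Nat.card_congr Equiv.subtypePiEquivPi, Nat.card_pi]

lemma isConj_of_prod_card_conjugators_ne_zero [Finite G] (hconn : Γ.Connected) {k : V → G}
    (h : ∏ d : Γ.PosDart, Nat.card (conjugators (k d.1.fst) (k d.1.snd)) ≠ 0) (u w : V) :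
    IsConj (k u) (k w) := by
  have hconj : ∀ d : Γ.PosDart, IsConj (k d.1.fst) (k d.1.snd) := fun d =>
    isConj_of_mem_conjugators (Nat.card_ne_zero.mp (Finset.prod_ne_zero_iff.mp h d
      (Finset.mem_univ _))).1.some.2
  rw [← ConjClasses.mk_eq_mk_iff_isConj]
  refine hconn.apply_eq_of_forall_adj (f := fun u => ConjClasses.mk (k u)) (fun a b hab => ?_) u w
  rw [ConjClasses.mk_eq_mk_iff_isConj]
  rcases lt_or_gt_of_ne (Γ.ne_of_adj hab) with hlt | hgt
  · exact hconj ⟨⟨(a, b), hab⟩, hlt⟩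
  · exact (hconj ⟨⟨(b, a), hab.symm⟩, hgt⟩).symm

lemma prod_card_conjugators_of_forall_mem [Finite G] {k : V → G} {C : ConjClasses G}
    (hk : ∀ u, k u ∈ C.carrier) :
    ∏ d : Γ.PosDart, Nat.card (conjugators (k d.1.fst) (k d.1.snd)) =
      (Nat.card G / Nat.card C.carrier) ^ Nat.card Γ.edgeSet := by
  have hcard : ∀ u w, Nat.card (conjugators (k u) (k w)) = Nat.card G / Nat.card C.carrier := by
    intro u w
    simp only [ConjClasses.mem_carrier_iff_mk_eq] at hk
    rw [card_conjugators_eq_div (ConjClasses.mk_eq_mk_iff_isConj.mp ((hk u).trans (hk w).symm)),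
      hk u]
  simp only [hcard, Finset.prod_const, Finset.card_univ, ← Nat.card_eq_fintype_card,
    SimpleGraph.card_posDart]

lemma sum_prod_card_conjugators [Fintype G] [DecidableEq G] [Fintype V] [Nonempty V]
    (hconn : Γ.Connected) :
    ∑ k : V → G, ∏ d : Γ.PosDart, Nat.card (conjugators (k d.1.fst) (k d.1.snd)) =
      ∑ C : ConjClasses G,
        Nat.card C.carrier ^ Fintype.card V *
          (Nat.card G / Nat.card C.carrier) ^ Nat.card Γ.edgeSet := by
  classical
  obtain ⟨v₀⟩ := ‹Nonempty V›
  rw [← Finset.sum_fiberwise Finset.univ fun k : V → G => ConjClasses.mk (k v₀)]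
  refine Finset.sum_congr rfl fun C _ => ?_
  have hsub : (Finset.univ.filter fun k : V → G => ∀ u, k u ∈ C.carrier) ⊆
      Finset.univ.filter fun k => ConjClasses.mk (k v₀) = C :=
    Finset.monotone_filter_right _ fun k _ hk => ConjClasses.mem_carrier_iff_mk_eq.mp (hk v₀)
  have hcard : (Finset.univ.filter fun k : V → G => ∀ u, k u ∈ C.carrier).card =
      Nat.card C.carrier ^ Fintype.card V := by
    rw [← Fintype.card_subtype, ← Nat.card_eq_fintype_card,
      Nat.card_congr Equiv.subtypePiEquivPi, Nat.card_fun, Nat.card_eq_fintype_card (α := V)]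
  rw [← Finset.sum_subset hsub ?_, Finset.sum_congr rfl
    fun k hk => prod_card_conjugators_of_forall_mem (Finset.mem_filter.mp hk).2, Finset.sum_const,
    hcard, smul_eq_mul]
  intro k hk hk'
  by_contra hne
  rw [Finset.mem_filter] at hk hk'
  exact hk' ⟨Finset.mem_univ k, fun u => ConjClasses.mem_carrier_iff_mk_eq.mpr
    ((ConjClasses.mk_eq_mk_iff_isConj.mpr
      (isConj_of_prod_card_conjugators_ne_zero hconn hne u v₀)).trans hk.2)⟩

end Counting

/-- Let `G` be a finite group and `Γ` a connected simple graph on a finite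
nonempty vertex set with `v` vertices and `l ≥ v` edges. Gauge transformations `k : V → G`
act on `G`-configurations (functions on darts with `g d.symm = (g d)⁻¹`) by
`(k • g) d = k d.fst * g d * (k d.snd)⁻¹`. The number of gauge orbits equals
`∑_{conjugacy classes C} (|G| / |C|) ^ (l - v)`. -/
theorem card_gauge_orbits
    {G V : Type} [Group G] [Fintype G] [DecidableEq G] [Fintype V] [Nonempty V]
    (Γ : SimpleGraph V) (hconn : Γ.Connected)
    (v l : ℕ) (hv : v = Fintype.card V) (hl : l = Nat.card Γ.edgeSet) (hvl : v ≤ l) :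
    Nat.card (Quot (fun g g' : {g : Γ.Dart → G // ∀ d, g d.symm = (g d)⁻¹} =>
        ∃ k : V → G, ∀ d : Γ.Dart, g'.1 d = k d.fst * g.1 d * (k d.snd)⁻¹)) =
      ∑ C : ConjClasses G, (Nat.card G / Nat.card C.carrier) ^ (l - v) := by
  classical
  subst hv hl
  let : LinearOrder V := LinearOrder.lift' _ (Fintype.equivFin V).injective
  have hburnside :=
    MulAction.sum_card_fixedBy_eq_card_orbits_mul_natCard (V → G) (GaugeConfig G Γ)
  rw [Finset.sum_congr rfl fun k _ => GaugeConfig.card_fixedBy k, sum_prod_card_conjugators hconn,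
    Nat.card_fun, Nat.card_eq_fintype_card (α := V)] at hburnside
  simp only [fun C : ConjClasses G => C.pow_card_carrier_mul_pow (G := G) hvl] at hburnside
  refine (GaugeConfig.card_quot_eq_card_orbits Γ).trans ?_
  refine Nat.eq_of_mul_eq_mul_right (pow_pos (Nat.card_pos (α := G)) (Fintype.card V)) ?_
  rw [Finset.sum_mul, hburnside]
end

section
/- Let G be a group, Γ a connected simple graph on a finite vertex set V, T a spanning tree of Γ (a connected acyclic spanning subgraph), and x₀ ∈ V a root vertex. Then for every G-configuration g on Γ there exists a gauge transformation k : V → G with k(x₀) = 1 such that (k • g)(d) = 1 for every dart d of Γ whose underlying edge lies in T. -/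
namespace GaugeAux

variable {G V : Type} [Group G] {Γ T : SimpleGraph V}

/-- Product of a configuration along a walk in a subgraph. -/
def wprod (hle : T ≤ Γ) (g : Γ.Dart → G) : ∀ {u v : V}, T.Walk u v → G
  | _, _, SimpleGraph.Walk.nil => 1
  | _, _, SimpleGraph.Walk.cons h p => g ⟨(_, _), hle h⟩ * wprod hle g p

lemma wprod_nil (hle : T ≤ Γ) (g : Γ.Dart → G) {u : V} :
    wprod hle g (SimpleGraph.Walk.nil : T.Walk u u) = 1 := rfl

lemma wprod_cons (hle : T ≤ Γ) (g : Γ.Dart → G) {u v w : V} (h : T.Adj u v)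
    (p : T.Walk v w) :
    wprod hle g (SimpleGraph.Walk.cons h p) = g ⟨(u, v), hle h⟩ * wprod hle g p := rfl

lemma wprod_append (hle : T ≤ Γ) (g : Γ.Dart → G) {u v w : V} (p : T.Walk u v)
    (q : T.Walk v w) :
    wprod hle g (p.append q) = wprod hle g p * wprod hle g q := by
  induction p with
  | nil => simp [wprod_nil]
  | cons h p ih => simp [SimpleGraph.Walk.cons_append, wprod_cons, ih, mul_assoc]

lemma wprod_concat (hle : T ≤ Γ) (g : Γ.Dart → G) {u v w : V} (p : T.Walk u v)
    (h : T.Adj v w) :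
    wprod hle g (p.concat h) = wprod hle g p * g ⟨(v, w), hle h⟩ := by
  rw [SimpleGraph.Walk.concat_eq_append, wprod_append, wprod_cons, wprod_nil, mul_one]

lemma isPath_concat {u v w : V} {p : T.Walk u v} (hp : p.IsPath) (h : T.Adj v w)
    (hw : w ∉ p.support) : (p.concat h).IsPath := by
  have : (SimpleGraph.Walk.cons h.symm p.reverse).IsPath := by
    apply SimpleGraph.Walk.IsPath.cons hp.reverse
    simpa using hw
  have h2 := this.reverse
  rwa [SimpleGraph.Walk.reverse_cons, SimpleGraph.Walk.reverse_reverse] at h2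

end GaugeAux

/-- Let `G` be a group, `Γ` a connected simple graph on a finite vertex set,
`T` a spanning tree of `Γ` and `x₀` a root vertex. Every `G`-configuration on `Γ` can be
brought, by a gauge transformation which is the identity at the root, to a configuration
equal to `1` on every dart whose underlying edge lies in `T`. -/
theorem exists_internal_gauge_fixing_tree
    {G V : Type} [Group G] [Fintype V] (Γ T : SimpleGraph V)
    (hconn : Γ.Connected) (hle : T ≤ Γ) (hT : T.IsTree) (x₀ : V)
    (g : Γ.Dart → G) (hg : ∀ d : Γ.Dart, g d.symm = (g d)⁻¹) :
    ∃ k : V → G, k x₀ = 1 ∧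
      ∀ d : Γ.Dart, T.Adj d.fst d.snd → k d.fst * g d * (k d.snd)⁻¹ = 1 := by
  classical
  -- the unique path from the root to each vertex
  let P : ∀ v : V, T.Walk x₀ v := fun v => (hT.existsUnique_path x₀ v).choose
  have hP : ∀ v : V, (P v).IsPath := fun v => (hT.existsUnique_path x₀ v).choose_spec.1
  have hPu : ∀ (v : V) (q : T.Walk x₀ v), q.IsPath → q = P v :=
    fun v q hq => (hT.existsUnique_path x₀ v).choose_spec.2 q hq
  let k : V → G := fun v => GaugeAux.wprod hle g (P v)
  have hk0 : k x₀ = 1 := by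
    have : (SimpleGraph.Walk.nil : T.Walk x₀ x₀) = P x₀ :=
      hPu x₀ SimpleGraph.Walk.nil SimpleGraph.Walk.IsPath.nil
    simp only [k, ← this, GaugeAux.wprod_nil]
  -- key step: for every tree edge, k transports correctly
  have key : ∀ u v (h : T.Adj u v), k v = k u * g ⟨(u, v), hle h⟩ := by
    intro u v h
    by_cases hv : v ∈ (P u).support
    · -- then the path to u passes through v, and from v it is exactly the edge v-u
      have htake : ((P u).takeUntil v hv).IsPath := (hP u).takeUntil hv
      have hdrop : ((P u).dropUntil v hv).IsPath := (hP u).dropUntil hv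
      have hPv : (P u).takeUntil v hv = P v := hPu v _ htake
      -- the path from v to u in the tree is the single edge
      have hsingle : (P u).dropUntil v hv = SimpleGraph.Walk.cons h.symm SimpleGraph.Walk.nil := by
        have h1 : ∃! q : T.Walk v u, q.IsPath := hT.existsUnique_path v u
        have h2 : (SimpleGraph.Walk.cons h.symm (SimpleGraph.Walk.nil : T.Walk u u)).IsPath := by
          simp [SimpleGraph.Walk.isPath_def, h.ne']
        exact h1.unique hdrop h2
      have hspec := (P u).take_spec hv
      have : k u = k v * g ⟨(v, u), hle h.symm⟩ := by
        have := congrArg (GaugeAux.wprod hle g) hspec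
        rw [GaugeAux.wprod_append, hPv, hsingle] at this
        simp only [GaugeAux.wprod_cons, GaugeAux.wprod_nil, mul_one] at this
        exact this.symm
      have hinv : g ⟨(v, u), hle h.symm⟩ = (g ⟨(u, v), hle h⟩)⁻¹ := by
        have := hg ⟨(u, v), hle h⟩
        simpa [SimpleGraph.Dart.symm] using this
      rw [this, hinv, mul_assoc, inv_mul_cancel, mul_one]
    · -- otherwise extend the path to u by the edge
      have hcat : ((P u).concat h).IsPath := GaugeAux.isPath_concat (hP u) h hv
      have : (P u).concat h = P v := hPu v _ hcat
      calc k v = GaugeAux.wprod hle g ((P u).concat h) := by rw [this]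
        _ = k u * g ⟨(u, v), hle h⟩ := GaugeAux.wprod_concat hle g _ h
  refine ⟨k, hk0, fun d hd => ?_⟩
  have hdart : (⟨(d.fst, d.snd), hle hd⟩ : Γ.Dart) = d := by
    cases d with
    | mk t a => rfl
  have := key d.fst d.snd hd
  rw [hdart] at this
  rw [this]
  group
end

section
/- Let G be a group, Γ a connected simple graph on a finite vertex set V, and x₀ ∈ V a root vertex. For a G-configuration g and a walk w in Γ, define the holonomy hol(g, w) as the ordered product of g over the darts of w. Then two G-configurations g and g' satisfy hol(g, w) = hol(g', w) for every closed walk w from x₀ to x₀ if and only if there exists an internal gauge transformation relating them, i.e. a function k : V → G with k(x₀) = 1 and g' = k • g. -/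
private lemma hol_reverse {G V : Type} [Group G] {Γ : SimpleGraph V}
    (g : Γ.Dart → G) (hg : ∀ d : Γ.Dart, g d.symm = (g d)⁻¹)
    {u v : V} (w : Γ.Walk u v) :
    (w.reverse.darts.map g).prod = ((w.darts.map g).prod)⁻¹ := by
  rw [SimpleGraph.Walk.darts_reverse, List.map_reverse, List.map_map,
    List.prod_inv_reverse, List.map_map]
  congr 2
  exact List.map_congr_left fun d _ => hg d

private lemma hol_gauge {G V : Type} [Group G] {Γ : SimpleGraph V}
    (g g' : Γ.Dart → G) (k : V → G)
    (hk : ∀ d : Γ.Dart, g' d = k d.fst * g d * (k d.snd)⁻¹)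
    {u v : V} (w : Γ.Walk u v) :
    (w.darts.map g').prod = k u * (w.darts.map g).prod * (k v)⁻¹ := by
  induction w with
  | nil => simp
  | cons h p ih =>
    simp only [SimpleGraph.Walk.darts_cons, List.map_cons, List.prod_cons, ih, hk]
    group

/-- Let `G` be a group, `Γ` a connected simple graph on a finite vertex set
and `x₀` a root vertex. Two `G`-configurations have the same holonomy (ordered product of the
configuration along the darts) for every closed walk based at `x₀` if and only if they are
related by an internal gauge transformation (one equal to `1` at `x₀`). -/
theorem holonomies_eq_iff_internal_gauge_equivalent
    {G V : Type} [Group G] [Fintype V] (Γ : SimpleGraph V) (hconn : Γ.Connected) (x₀ : V)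
    (g g' : Γ.Dart → G)
    (hg : ∀ d : Γ.Dart, g d.symm = (g d)⁻¹) (hg' : ∀ d : Γ.Dart, g' d.symm = (g' d)⁻¹) :
    (∀ w : Γ.Walk x₀ x₀, (w.darts.map g).prod = (w.darts.map g').prod) ↔
      ∃ k : V → G, k x₀ = 1 ∧
        ∀ d : Γ.Dart, g' d = k d.fst * g d * (k d.snd)⁻¹ := by
  constructor
  · intro h
    let p : ∀ v : V, Γ.Walk x₀ v := fun v => (hconn x₀ v).some
    refine ⟨fun v => (((p v).darts.map g').prod)⁻¹ * ((p v).darts.map g).prod, ?_, ?_⟩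
    · show (((p x₀).darts.map g').prod)⁻¹ * ((p x₀).darts.map g).prod = 1
      rw [← h (p x₀)]; simp
    · intro d
      show g' d = (((p d.fst).darts.map g').prod)⁻¹ * ((p d.fst).darts.map g).prod * g d *
        ((((p d.snd).darts.map g').prod)⁻¹ * ((p d.snd).darts.map g).prod)⁻¹
      set a := d.fst
      set b := d.snd
      have hd : Γ.Adj a b := d.adj
      have hdart : (⟨(a, b), hd⟩ : Γ.Dart) = d := rfl
      have heq := h ((p a).append ((SimpleGraph.Walk.cons hd .nil).append (p b).reverse))
      simp only [SimpleGraph.Walk.darts_append, List.map_append, List.prod_append,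
        SimpleGraph.Walk.darts_cons, SimpleGraph.Walk.darts_nil, List.map_cons,
        List.map_nil, List.prod_cons, List.prod_nil, hol_reverse g hg,
        hol_reverse g' hg', hdart] at heq
      set A := ((p a).darts.map g).prod
      set A' := ((p a).darts.map g').prod
      set B := ((p b).darts.map g).prod
      set B' := ((p b).darts.map g').prod
      have : g' d = A'⁻¹ * (A * (g d * 1 * B⁻¹)) * B' := by
        rw [heq]; group
      rw [this]; group
  · rintro ⟨k, hk0, hk⟩
    intro w
    rw [hol_gauge g g' k hk w, hk0]
    simp
end

section
/- Let G be a finite group, Γ a connected simple graph on a finite nonempty vertex set V with v = card V, x₀ ∈ V a root vertex, and g a G-configuration on Γ. Then the holonomy class of g, i.e. the set of configurations g' for which there exists k : V → G with k(x₀) = 1 and g' = k • g, has cardinality exactly |G|^(v − 1). -/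
/-- Let `G` be a finite group, `Γ` a connected simple graph on a finite
nonempty vertex set, `x₀` a root vertex and `g` a `G`-configuration on `Γ`. The holonomy
class of `g`, i.e. the set of configurations obtained from `g` by an internal gauge
transformation (one equal to `1` at `x₀`), has cardinality `|G| ^ (card V - 1)`. -/
theorem card_holonomy_class
    {G V : Type} [Group G] [Fintype G] [Fintype V] [Nonempty V]
    (Γ : SimpleGraph V) (hconn : Γ.Connected) (x₀ : V)
    (g : Γ.Dart → G) (hg : ∀ d : Γ.Dart, g d.symm = (g d)⁻¹) :
    Nat.card {g' : Γ.Dart → G // (∀ d : Γ.Dart, g' d.symm = (g' d)⁻¹) ∧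
        ∃ k : V → G, k x₀ = 1 ∧ ∀ d : Γ.Dart, g' d = k d.fst * g d * (k d.snd)⁻¹} =
      Nat.card G ^ (Fintype.card V - 1) := by
  classical
  -- The map from internal gauge transformations to the holonomy class is a bijection.
  set S := {g' : Γ.Dart → G // (∀ d : Γ.Dart, g' d.symm = (g' d)⁻¹) ∧
      ∃ k : V → G, k x₀ = 1 ∧ ∀ d : Γ.Dart, g' d = k d.fst * g d * (k d.snd)⁻¹} with hS
  set K := {k : V → G // k x₀ = 1} with hK
  have hsymm : ∀ (k : V → G) (d : Γ.Dart),
      k d.symm.fst * g d.symm * (k d.symm.snd)⁻¹ =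
        (k d.fst * g d * (k d.snd)⁻¹)⁻¹ := by
    intro k d
    have h1 : d.symm.fst = d.snd := rfl
    have h2 : d.symm.snd = d.fst := rfl
    rw [h1, h2, hg]
    group
  let F : K → S := fun k =>
    ⟨fun d => k.1 d.fst * g d * (k.1 d.snd)⁻¹,
      fun d => hsymm k.1 d, k.1, k.2, fun _ => rfl⟩
  have hFbij : Function.Bijective F := by
    constructor
    · rintro ⟨k, hk⟩ ⟨k', hk'⟩ h
      have heq : ∀ d : Γ.Dart, k d.fst * g d * (k d.snd)⁻¹
          = k' d.fst * g d * (k' d.snd)⁻¹ :=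
        fun d => congrFun (congrArg Subtype.val h) d
      have key : ∀ {u v : V} (_ : Γ.Walk u v), k u = k' u → k v = k' v := by
        intro u v p
        induction p with
        | nil => exact id
        | cons hadj p ih =>
          intro hu
          apply ih
          have h2 := heq ⟨(_, _), hadj⟩
          rw [hu] at h2
          exact inv_injective (mul_left_cancel h2)
      ext v
      exact key ((hconn x₀ v).some) (hk.trans hk'.symm)
    · rintro ⟨g', hg', k, hk, hkg⟩
      exact ⟨⟨k, hk⟩, Subtype.ext (funext fun d => (hkg d).symm)⟩
  have h1 : Nat.card S = Nat.card K := (Nat.card_eq_of_bijective F hFbij).symm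
  -- Count internal gauge transformations.
  have e : K ≃ ({v : V // v ≠ x₀} → G) :=
    { toFun := fun k v => k.1 v.1
      invFun := fun f => ⟨fun v => if h : v = x₀ then 1 else f ⟨v, h⟩, by simp⟩
      left_inv := by
        rintro ⟨k, hk⟩
        ext v
        dsimp
        split_ifs with h
        · subst h; exact hk.symm
        · rfl
      right_inv := by
        intro f
        ext v
        simp [v.2] }
  rw [h1, Nat.card_congr e, Nat.card_eq_fintype_card, Fintype.card_fun,
    Nat.card_eq_fintype_card, Fintype.card_subtype_compl, Fintype.card_subtype_eq]
end

section
/- Let G be a group and Γ a connected simple graph on a finite vertex set V with at least two vertices. A family k : V → G acts trivially on every G-configuration on Γ (i.e. k • g = g for all configurations g) if and only if k is a constant function whose value lies in the center Z(G) of G. In particular the kernel of the gauge-group action of (V → G) on configurations is the diagonal copy of Z(G). -/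
/-- Let `G` be a group and `Γ` a connected simple graph on a finite vertex
set with at least two vertices. A gauge transformation `k : V → G` acts trivially on every
`G`-configuration on `Γ` if and only if `k` is a constant function whose value lies in the
center of `G`. -/
theorem gauge_acts_trivially_iff_constant_central
    {G V : Type} [Group G] [Fintype V] (Γ : SimpleGraph V) (hconn : Γ.Connected)
    (hV : 2 ≤ Fintype.card V) (k : V → G) :
    (∀ g : Γ.Dart → G, (∀ d : Γ.Dart, g d.symm = (g d)⁻¹) →
        ∀ d : Γ.Dart, k d.fst * g d * (k d.snd)⁻¹ = g d) ↔
      ∃ c ∈ Subgroup.center G, k = fun _ => c := by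
  classical
  constructor
  · intro H
    -- from the trivial configuration: k is constant along edges
    have hedge : ∀ d : Γ.Dart, k d.fst = k d.snd := by
      intro d
      have := H (fun _ => 1) (by simp) d
      have : k d.fst * (k d.snd)⁻¹ = 1 := by simpa using this
      exact mul_inv_eq_one.mp this
    -- k is constant on walks
    have hwalk : ∀ u v : V, Γ.Reachable u v → k u = k v := by
      intro u v huv
      obtain ⟨p⟩ := huv
      induction p with
      | nil => rfl
      | cons h p ih =>
        rename_i a b c
        have : k a = k b := hedge ⟨(a, b), h⟩
        rw [this, ih]
    -- there exists an edge
    obtain ⟨u, v, huv, hne⟩ : ∃ u v, Γ.Adj u v ∧ u ≠ v := by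
      obtain ⟨a, b, hab⟩ := Fintype.exists_pair_of_one_lt_card (α := V) (by omega)
      obtain ⟨p⟩ := hconn a b
      cases p with
      | nil => exact absurd rfl hab
      | cons h _ => exact ⟨a, _, h, h.ne⟩
    set d0 : Γ.Dart := ⟨(u, v), huv⟩ with hd0
    refine ⟨k u, ?_, ?_⟩
    · rw [Subgroup.mem_center_iff]
      intro x
      -- configuration equal to x on d0, x⁻¹ on d0.symm, 1 elsewhere
      set g : Γ.Dart → G := fun d => if d = d0 then x else if d = d0.symm then x⁻¹ else 1
        with hg
      have hsymm : ∀ d : Γ.Dart, g d.symm = (g d)⁻¹ := by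
        intro d
        by_cases h1 : d = d0
        · subst h1
          simp only [hg]
          rw [if_neg (SimpleGraph.Dart.symm_ne d0)]
          simp
        · by_cases h2 : d = d0.symm
          · subst h2
            simp only [hg, SimpleGraph.Dart.symm_symm]
            rw [if_neg (SimpleGraph.Dart.symm_ne d0)]
            simp
          · have h3 : d.symm ≠ d0 := fun h => h2 (by rw [← SimpleGraph.Dart.symm_symm d, h])
            have h4 : d.symm ≠ d0.symm := fun h => h1 (by
              have := congrArg SimpleGraph.Dart.symm h
              simpa using this)
            simp [hg, h1, h2, h3, h4]
      have := H g hsymm d0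
      have hgd0 : g d0 = x := by simp [hg]
      rw [hgd0] at this
      have hfst : d0.fst = u := rfl
      have hsnd : d0.snd = v := rfl
      rw [hfst, hsnd] at this
      have hkuv : k u = k v := hedge d0
      rw [← hkuv] at this
      -- this : k u * x * (k u)⁻¹ = x
      have := mul_inv_eq_iff_eq_mul.mp this
      exact this.symm
    · funext w
      exact (hwalk u w (hconn u w)).symm
  · rintro ⟨c, hc, rfl⟩ g hg d
    rw [Subgroup.mem_center_iff] at hc
    rw [mul_inv_eq_iff_eq_mul, hc (g d)]
end

section
/- Let Γ be a tree, i.e. a connected acyclic simple graph, on a vertex set V, and let x₀, x, y ∈ V. Let p be a path (a walk without repeated vertices) from x₀ to x and q a path from x₀ to y. Then no dart can appear in p with one orientation and in q with the opposite orientation: for every dart d, if d is among the darts of p, then d.symm is not among the darts of q. (Consequently, if an edge occurs in both the tree path from x₀ to x and the tree path from y to x₀, it occurs with opposite orientations in the concatenated walk.) -/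
open SimpleGraph

lemma dart_snd_mem_tail_support {V : Type} {Γ : SimpleGraph V} {u v : V}
    (w : Γ.Walk u v) (d : Γ.Dart) (hd : d ∈ w.darts) : d.snd ∈ w.support.tail := by
  induction w with
  | nil => simp at hd
  | cons h w ih =>
    rw [SimpleGraph.Walk.darts_cons, List.mem_cons] at hd
    rw [SimpleGraph.Walk.support_cons, List.tail_cons]
    rcases hd with rfl | hd
    · exact w.start_mem_support
    · exact List.mem_of_mem_tail (ih hd)

/-- If a dart is in a path, then it is in the prefix up to its second vertex. -/
lemma dart_mem_takeUntil_snd {V : Type} [DecidableEq V] {Γ : SimpleGraph V} {u v : V}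
    {w : Γ.Walk u v} (hw : w.IsPath) (d : Γ.Dart) (hd : d ∈ w.darts) :
    d ∈ (w.takeUntil d.snd (w.dart_snd_mem_support_of_mem_darts hd)).darts := by
  set hs := w.dart_snd_mem_support_of_mem_darts hd
  have hsplit := w.take_spec hs
  have : d ∈ (w.takeUntil d.snd hs).darts ∨ d ∈ (w.dropUntil d.snd hs).darts := by
    rw [← List.mem_append, ← SimpleGraph.Walk.darts_append, hsplit]
    exact hd
  rcases this with h | h
  · exact h
  · exfalso
    have hdrop : (w.dropUntil d.snd hs).IsPath := hw.dropUntil hs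
    have htail := dart_snd_mem_tail_support _ d h
    have hnodup := hdrop.support_nodup
    rw [SimpleGraph.Walk.support_eq_cons] at hnodup
    exact (List.nodup_cons.mp hnodup).1 htail

/-- In a tree, if `p` is a path from `x₀` to `x` and `q` a path from `x₀`
to `y`, then no dart appears in `p` with one orientation and in `q` with the opposite
orientation. -/
theorem tree_paths_no_opposite_dart
    {V : Type} (Γ : SimpleGraph V) (hT : Γ.IsTree) (x₀ x y : V)
    (p : Γ.Walk x₀ x) (hp : p.IsPath) (q : Γ.Walk x₀ y) (hq : q.IsPath) :
    ∀ d : Γ.Dart, d ∈ p.darts → d.symm ∉ q.darts := by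
  classical
  intro d hdp hdq
  set a := d.fst with ha
  set b := d.snd with hb
  have hab : a ≠ b := d.adj.ne
  -- uniqueness of paths: any two paths between same endpoints are equal
  have huniq : ∀ (u v : V) (w₁ w₂ : Γ.Walk u v), w₁.IsPath → w₂.IsPath → w₁ = w₂ := by
    intro u v w₁ w₂ h₁ h₂
    obtain ⟨w, -, hu⟩ := hT.existsUnique_path u v
    rw [hu w₁ h₁, hu w₂ h₂]
  -- prefix of p up to b contains the dart d, hence contains a
  have hbp : b ∈ p.support := p.dart_snd_mem_support_of_mem_darts hdp
  have hdp' : d ∈ (p.takeUntil b hbp).darts := dart_mem_takeUntil_snd hp d hdp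
  have haP : a ∈ (p.takeUntil b hbp).support :=
    (p.takeUntil b hbp).dart_fst_mem_support_of_mem_darts hdp'
  -- prefix of q up to a contains the dart d.symm, hence contains b
  have haq : a ∈ q.support := q.dart_snd_mem_support_of_mem_darts hdq
  have hdq' : d.symm ∈ (q.takeUntil a haq).darts := dart_mem_takeUntil_snd hq d.symm hdq
  have hbQ : b ∈ (q.takeUntil a haq).support :=
    (q.takeUntil a haq).dart_fst_mem_support_of_mem_darts hdq'
  -- P : path x₀ → b, contains a;  Q : path x₀ → a, contains b
  set P := p.takeUntil b hbp with hP
  set Q := q.takeUntil a haq with hQ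
  have hPpath : P.IsPath := hp.takeUntil hbp
  have hQpath : Q.IsPath := hq.takeUntil haq
  -- general: a strict length inequality for prefixes up to a non-endpoint vertex
  have hstrict : ∀ (u v z : V) (w : Γ.Walk u v) (hz : z ∈ w.support), z ≠ v →
      (w.takeUntil z hz).length < w.length := by
    intro u v z w hz hne
    have hsplit := w.take_spec hz
    have hlen : (w.takeUntil z hz).length + (w.dropUntil z hz).length = w.length := by
      rw [← SimpleGraph.Walk.length_append, hsplit]
    have hpos : 0 < (w.dropUntil z hz).length := by
      by_contra hc
      push_neg at hc
      interval_cases h : (w.dropUntil z hz).length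
      exact hne ((w.dropUntil z hz).eq_of_length_eq_zero h)
    omega
  -- P.takeUntil a is a path x₀ → a, so it equals Q; strictly shorter than P
  have h1 : Q.length < P.length := by
    have heq := huniq x₀ a (P.takeUntil a haP) Q (hPpath.takeUntil haP) hQpath
    have hlt := hstrict x₀ b a P haP hab
    rw [heq] at hlt
    exact hlt
  -- symmetrically, Q.takeUntil b is a path x₀ → b, so it equals P; strictly shorter than Q
  have h2 : P.length < Q.length := by
    have heq := huniq x₀ b (Q.takeUntil b hbQ) P (hQpath.takeUntil hbQ) hPpath
    have hlt := hstrict x₀ a b Q hbQ hab.symm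
    rw [heq] at hlt
    exact hlt
  omega
end

section
/- Let G be a finite group, Γ a connected simple graph on a finite nonempty vertex set V with v = card V, T a spanning tree of Γ, and x₀ ∈ V a root vertex. Let f be a complex-valued function on G-configurations which is invariant under internal gauge transformations, i.e. f(k • g) = f(g) whenever k(x₀) = 1. Then the sum of f over all configurations equals |G|^(v−1) times the sum of f over the gauge-fixed configurations, i.e. over those configurations g with g(d) = 1 for every dart d whose underlying edge lies in T: Σ_{all configurations g} f(g) = |G|^(v−1) · Σ_{g : g ≡ 1 on T} f(g). -/
/-!
Let `K` be the group of internal gauge transformations. For a configuration `g`, let `h(v)` be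
the holonomy of `g` along the tree path from `x₀` to `v`; it is well defined because paths in
a tree are unique, and `h(x₀) = 1`. The transform `h • g` is trivial on every edge of `T`, and
`(k, g') ↦ k • g'` is a bijection `K × {gauge-fixed} → {configurations}` with inverse
`g ↦ (h⁻¹, h • g)`. Summing the gauge-invariant `f` over this bijection gives `|K| = |G|^(v-1)`
copies of the gauge-fixed sum.
-/

open SimpleGraph

namespace SimpleGraph

variable {V : Type*}

def configurations (Γ : SimpleGraph V) (G : Type*) [Group G] : Set (Γ.Dart → G) :=
  {g | ∀ d : Γ.Dart, g d.symm = (g d)⁻¹}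

def gaugeFixedConfigurations (Γ T : SimpleGraph V) (G : Type*) [Group G] : Set (Γ.Dart → G) :=
  {g | g ∈ configurations Γ G ∧ ∀ d : Γ.Dart, T.Adj d.fst d.snd → g d = 1}

variable {G : Type*} [Group G] {Γ T : SimpleGraph V}

def gaugeTransform (k : V → G) (g : Γ.Dart → G) : Γ.Dart → G :=
  fun d => k d.fst * g d * (k d.snd)⁻¹

@[simp] lemma gaugeTransform_one (g : Γ.Dart → G) : gaugeTransform 1 g = g := by
  funext d; simp [gaugeTransform]

lemma gaugeTransform_gaugeTransform (k k' : V → G) (g : Γ.Dart → G) :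
    gaugeTransform k (gaugeTransform k' g) = gaugeTransform (k * k') g := by
  funext d; simp only [gaugeTransform, Pi.mul_apply]; group

lemma gaugeTransform_mem_configurations {g : Γ.Dart → G} (hg : g ∈ configurations Γ G)
    (k : V → G) : gaugeTransform k g ∈ configurations Γ G := by
  intro d
  show k d.snd * g d.symm * (k d.fst)⁻¹ = (k d.fst * g d * (k d.snd)⁻¹)⁻¹
  rw [hg d]
  group

def Walk.holonomy (g : Γ.Dart → G) {a b : V} (p : Γ.Walk a b) : G := (p.darts.map g).prod

@[simp] lemma Walk.holonomy_nil (g : Γ.Dart → G) {a : V} : (nil : Γ.Walk a a).holonomy g = 1 :=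
  rfl

lemma Walk.holonomy_concat (g : Γ.Dart → G) {a b c : V} (p : Γ.Walk a b) (h : Γ.Adj b c) :
    (p.concat h).holonomy g = p.holonomy g * g ⟨(b, c), h⟩ := by
  simp [holonomy, darts_concat]

lemma Walk.holonomy_gaugeTransform (k : V → G) (g : Γ.Dart → G) {a b : V} (p : Γ.Walk a b) :
    p.holonomy (gaugeTransform k g) = k a * p.holonomy g * (k b)⁻¹ := by
  induction p with
  | nil => simp
  | cons h p ih =>
    simp only [holonomy, darts_cons, List.map_cons, List.prod_cons] at ih ⊢
    rw [ih, gaugeTransform]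
    group

lemma Walk.holonomy_eq_one {g : Γ.Dart → G} (hg : ∀ d, g d = 1) {a b : V} (p : Γ.Walk a b) :
    p.holonomy g = 1 :=
  List.prod_eq_one (by simp [hg])

namespace IsTree

variable (hT : T.IsTree)

noncomputable def path (a b : V) : T.Walk a b := (hT.existsUnique_path a b).exists.choose

lemma isPath_path (a b : V) : (hT.path a b).IsPath := (hT.existsUnique_path a b).exists.choose_spec

lemma path_self (a : V) : hT.path a a = .nil := (Walk.isPath_iff_nil.mp (hT.isPath_path a a)).eq_nil

noncomputable def holonomyFrom (x₀ : V) (g : T.Dart → G) (v : V) : G := (hT.path x₀ v).holonomy g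

@[simp] lemma holonomyFrom_self (x₀ : V) (g : T.Dart → G) : hT.holonomyFrom x₀ g x₀ = 1 := by
  rw [holonomyFrom, path_self, Walk.holonomy_nil]

lemma holonomyFrom_of_adj (x₀ : V) {g : T.Dart → G} (hg : g ∈ configurations T G) {u v : V}
    (h : T.Adj u v) : hT.holonomyFrom x₀ g v = hT.holonomyFrom x₀ g u * g ⟨(u, v), h⟩ := by
  have hu := hT.isPath_path x₀ u
  have hv := hT.isPath_path x₀ v
  by_cases hvu : v ∈ (hT.path x₀ u).support
  · have : hT.path x₀ u = (hT.path x₀ v).concat h.symm :=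
      hT.isAcyclic.path_concat hv hu h.symm hvu
    have hsymm : g ⟨(v, u), h.symm⟩ = (g ⟨(u, v), h⟩)⁻¹ := hg ⟨(u, v), h⟩
    rw [holonomyFrom, holonomyFrom, this, Walk.holonomy_concat, hsymm, inv_mul_cancel_right]
  · have : hT.path x₀ v = (hT.path x₀ u).concat h :=
      hT.isAcyclic.path_concat hu hv h
        (hT.isAcyclic.mem_support_of_ne_mem_support_of_adj_of_isPath hv hu h.symm hvu)
    rw [holonomyFrom, holonomyFrom, this, Walk.holonomy_concat]

lemma holonomyFrom_gaugeTransform (x₀ : V) (k : V → G) {g : T.Dart → G} (hg : ∀ d, g d = 1)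
    (v : V) : hT.holonomyFrom x₀ (gaugeTransform k g) v = k x₀ * (k v)⁻¹ := by
  rw [holonomyFrom, Walk.holonomy_gaugeTransform, Walk.holonomy_eq_one hg, mul_one]

end IsTree

section Restriction

variable {W : Type*} {H : SimpleGraph W} (f : H →g Γ)

lemma comp_mapDart_mem_configurations {g : Γ.Dart → G} (hg : g ∈ configurations Γ G) :
    g ∘ f.mapDart ∈ configurations H G :=
  fun d => hg (f.mapDart d)

lemma gaugeTransform_comp_mapDart (k : V → G) (g : Γ.Dart → G) :
    gaugeTransform k g ∘ f.mapDart = gaugeTransform (k ∘ f) (g ∘ f.mapDart) :=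
  rfl

end Restriction

variable (x₀ : V) (hle : T ≤ Γ) (hT : T.IsTree)

noncomputable def gaugeFixing (g : Γ.Dart → G) : V → G :=
  hT.holonomyFrom x₀ (g ∘ (Hom.ofLE hle).mapDart)

lemma gaugeTransform_gaugeFixing_mem_gaugeFixedConfigurations {g : Γ.Dart → G}
    (hg : g ∈ configurations Γ G) :
    gaugeTransform (gaugeFixing x₀ hle hT g) g ∈ gaugeFixedConfigurations Γ T G := by
  refine ⟨gaugeTransform_mem_configurations hg _, fun d hd => ?_⟩
  have := hT.holonomyFrom_of_adj x₀ (comp_mapDart_mem_configurations (Hom.ofLE hle) hg) hd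
  simp only [gaugeTransform, gaugeFixing, this]
  simp

lemma gaugeFixing_gaugeTransform {k : V → G} (hk : k x₀ = 1) {g : Γ.Dart → G}
    (hg : g ∈ gaugeFixedConfigurations Γ T G) :
    gaugeFixing x₀ hle hT (gaugeTransform k g) = k⁻¹ := by
  funext v
  rw [gaugeFixing, gaugeTransform_comp_mapDart,
    hT.holonomyFrom_gaugeTransform x₀ _ (g := g ∘ (Hom.ofLE hle).mapDart) (fun d => hg.2 _ d.adj)]
  simp [hk]

noncomputable def gaugeFixingEquiv :
    {k : V → G // k x₀ = 1} × gaugeFixedConfigurations Γ T G ≃ configurations Γ G where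
  toFun p := ⟨gaugeTransform p.1.1 p.2.1, gaugeTransform_mem_configurations p.2.2.1 _⟩
  invFun g :=
    (⟨(gaugeFixing x₀ hle hT g)⁻¹, by simp [gaugeFixing]⟩,
      ⟨gaugeTransform (gaugeFixing x₀ hle hT g) g,
        gaugeTransform_gaugeFixing_mem_gaugeFixedConfigurations x₀ hle hT g.2⟩)
  left_inv := fun ⟨⟨k, hk⟩, ⟨g, hg⟩⟩ => by
    simp only [gaugeFixing_gaugeTransform x₀ hle hT hk hg, inv_inv, gaugeTransform_gaugeTransform,
      inv_mul_cancel, gaugeTransform_one]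
  right_inv := fun ⟨g, _⟩ => by
    simp only [gaugeTransform_gaugeTransform, inv_mul_cancel, gaugeTransform_one]

end SimpleGraph

lemma Nat.card_subtype_apply_eq {V G : Type*} [Fintype V] [DecidableEq V] (x₀ : V) (a : G) :
    Nat.card {k : V → G // k x₀ = a} = Nat.card G ^ (Fintype.card V - 1) := by
  have e : {k : V → G // k x₀ = a} ≃ {p : G × ({v // v ≠ x₀} → G) // p.1 = a} :=
    (Equiv.funSplitAt x₀ G).subtypeEquiv fun _ => Iff.rfl
  rw [Nat.card_congr (e.trans (Equiv.prodSubtypeFstEquivSubtypeProd (p := (· = a))))]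
  simp [Nat.card_fun, Fintype.card_subtype_compl]

theorem sum_over_configurations_eq_gauge_fixed_general
    {G V : Type} [Group G] [Fintype G] [Fintype V]
    (Γ T : SimpleGraph V) (hle : T ≤ Γ) (hT : T.IsTree) (x₀ : V)
    (f : (Γ.Dart → G) → ℂ)
    (hinv : ∀ g : Γ.Dart → G, (∀ d : Γ.Dart, g d.symm = (g d)⁻¹) →
      ∀ k : V → G, k x₀ = 1 → f (fun d => k d.fst * g d * (k d.snd)⁻¹) = f g) :
    ∑ᶠ g ∈ {g : Γ.Dart → G | ∀ d : Γ.Dart, g d.symm = (g d)⁻¹}, f g =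
      (Nat.card G : ℂ) ^ (Fintype.card V - 1) *
        ∑ᶠ g ∈ {g : Γ.Dart → G | (∀ d : Γ.Dart, g d.symm = (g d)⁻¹) ∧
            ∀ d : Γ.Dart, T.Adj d.fst d.snd → g d = 1}, f g := by
  classical
  change ∑ᶠ g ∈ Γ.configurations G, f g = _ * ∑ᶠ g ∈ Γ.gaugeFixedConfigurations T G, f g
  rw [← finsum_set_coe_eq_finsum_mem, ← finsum_set_coe_eq_finsum_mem, finsum_eq_sum_of_fintype,
    finsum_eq_sum_of_fintype]
  calc ∑ g : Γ.configurations G, f g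
      = ∑ p : {k : V → G // k x₀ = 1} × Γ.gaugeFixedConfigurations T G,
          f (gaugeTransform p.1.1 p.2.1) :=
        (Fintype.sum_equiv (gaugeFixingEquiv x₀ hle hT) _ _ fun _ => rfl).symm
    _ = ∑ p : {k : V → G // k x₀ = 1} × Γ.gaugeFixedConfigurations T G, f p.2 :=
        Fintype.sum_congr _ _ fun p => hinv _ p.2.2.1 _ p.1.2
    _ = _ := by
        simp only [Fintype.sum_prod_type, Finset.sum_const, Finset.card_univ]
        rw [← Nat.card_eq_fintype_card, Nat.card_subtype_apply_eq, nsmul_eq_mul, Nat.cast_pow]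

/-- Let `G` be a finite group, `Γ` a connected simple graph on a finite
nonempty vertex set, `T` a spanning tree of `Γ` and `x₀` a root. If `f` is a complex-valued
function on `G`-configurations invariant under internal gauge transformations, then the sum
of `f` over all configurations equals `|G| ^ (card V - 1)` times its sum over the gauge-fixed
configurations (those equal to `1` on all darts whose edges lie in `T`). -/
theorem sum_over_configurations_eq_gauge_fixed
    {G V : Type} [Group G] [Fintype G] [Fintype V] [Nonempty V]
    (Γ T : SimpleGraph V) (hconn : Γ.Connected) (hle : T ≤ Γ) (hT : T.IsTree) (x₀ : V)
    (f : (Γ.Dart → G) → ℂ)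
    (hinv : ∀ g : Γ.Dart → G, (∀ d : Γ.Dart, g d.symm = (g d)⁻¹) →
      ∀ k : V → G, k x₀ = 1 → f (fun d => k d.fst * g d * (k d.snd)⁻¹) = f g) :
    ∑ᶠ g ∈ {g : Γ.Dart → G | ∀ d : Γ.Dart, g d.symm = (g d)⁻¹}, f g =
      (Nat.card G : ℂ) ^ (Fintype.card V - 1) *
        ∑ᶠ g ∈ {g : Γ.Dart → G | (∀ d : Γ.Dart, g d.symm = (g d)⁻¹) ∧
            ∀ d : Γ.Dart, T.Adj d.fst d.snd → g d = 1}, f g :=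
  sum_over_configurations_eq_gauge_fixed_general Γ T hle hT x₀ f hinv
end
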